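/- arXiv:2301.05630 — 7 statements merged into one kernel-verified Lean document; each statement's English description precedes it below -/
import Mathlib

section
/- For every integer τ ≥ 1, the weighted sum of inverse square roots satisfies the lower bound Σ_{i=1}^{τ} α_τ^i / √i ≥ 1/√τ. -/
open Finset

/-- The learning rate `α_τ = (H+1)/(H+τ)`. -/
noncomputable def lr (H : ℝ) (τ : ℕ) : ℝ := (H + 1) / (H + τ)

/-- The coefficients `α_τ^i`: `α_τ^0 = ∏_{j=1}^{τ}(1-α_j)` and, for `1 ≤ i ≤ τ`,
`α_τ^i = α_i ∏_{j=i+1}^{τ}(1-α_j)` (empty products equal 1). -/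
noncomputable def acoef (H : ℝ) (τ i : ℕ) : ℝ :=
  if i = 0 then ∏ j ∈ Finset.Icc 1 τ, (1 - lr H j)
  else lr H i * ∏ j ∈ Finset.Icc (i + 1) τ, (1 - lr H j)

/-! The coefficients `α_τ^i` (`1 ≤ i ≤ τ`) are nonnegative and, because `α_1 = 1`, sum to `1`;
so the sum is a weighted average of the values `1/√i ≥ 1/√τ`. -/

theorem sum_Icc_mul_prod_one_sub {R : Type*} [CommRing R] (a : ℕ → R) (τ : ℕ) :
    ∑ i ∈ Icc 1 τ, a i * ∏ j ∈ Icc (i + 1) τ, (1 - a j) = 1 - ∏ j ∈ Icc 1 τ, (1 - a j) := by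
  induction τ with
  | zero => simp
  | succ n ih =>
    have hprod : ∀ i ∈ Icc 1 n,
        a i * ∏ j ∈ Icc (i + 1) (n + 1), (1 - a j)
          = (a i * ∏ j ∈ Icc (i + 1) n, (1 - a j)) * (1 - a (n + 1)) := by
      intro i hi
      rw [prod_Icc_succ_top (by simp only [mem_Icc] at hi; omega), mul_assoc]
    have hempty : Icc (n + 1 + 1) (n + 1) = ∅ := Icc_eq_empty (by omega)
    rw [sum_Icc_succ_top (show 1 ≤ n + 1 by omega), sum_congr rfl hprod, ← sum_mul, ih,
      prod_Icc_succ_top (show 1 ≤ n + 1 by omega), hempty, prod_empty]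
    ring

theorem lr_one {H : ℝ} (hH : H + 1 ≠ 0) : lr H 1 = 1 := by
  simp [lr, hH]

theorem lr_nonneg {H : ℝ} (hH : -1 < H) {i : ℕ} (hi : 1 ≤ i) : 0 ≤ lr H i := by
  have : (1 : ℝ) ≤ i := by exact_mod_cast hi
  unfold lr
  apply div_nonneg <;> linarith

theorem lr_le_one {H : ℝ} (hH : -1 < H) {i : ℕ} (hi : 1 ≤ i) : lr H i ≤ 1 := by
  have : (1 : ℝ) ≤ i := by exact_mod_cast hi
  unfold lr
  rw [div_le_one (by linarith)]
  linarith

theorem acoef_nonneg {H : ℝ} (hH : -1 < H) (τ i : ℕ) : 0 ≤ acoef H τ i := by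
  have hfactor : ∀ k, ∀ j ∈ Icc (k + 1) τ, 0 ≤ 1 - lr H j := fun k j hj =>
    sub_nonneg.mpr (lr_le_one hH (by simp only [mem_Icc] at hj; omega))
  unfold acoef
  split_ifs with hi
  · exact prod_nonneg (hfactor 0)
  · exact mul_nonneg (lr_nonneg hH (by omega)) (prod_nonneg (hfactor i))

theorem sum_Icc_acoef {H : ℝ} (hH : H + 1 ≠ 0) {τ : ℕ} (hτ : 1 ≤ τ) :
    ∑ i ∈ Icc 1 τ, acoef H τ i = 1 := by
  have hzero : ∏ j ∈ Icc 1 τ, (1 - lr H j) = 0 :=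
    prod_eq_zero (mem_Icc.mpr ⟨le_rfl, hτ⟩) (by rw [lr_one hH, sub_self])
  have hcoef : ∀ i ∈ Icc 1 τ, acoef H τ i = lr H i * ∏ j ∈ Icc (i + 1) τ, (1 - lr H j) :=
    fun i hi => if_neg (by simp only [mem_Icc] at hi; omega)
  rw [sum_congr rfl hcoef, sum_Icc_mul_prod_one_sub, hzero, sub_zero]

theorem stmt_0 (H : ℝ) (hH : 1 ≤ H) (τ : ℕ) (hτ : 1 ≤ τ) :
    1 / Real.sqrt τ ≤ ∑ i ∈ Finset.Icc 1 τ, acoef H τ i / Real.sqrt i := by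
  calc 1 / Real.sqrt τ = ∑ i ∈ Icc 1 τ, acoef H τ i * (1 / Real.sqrt τ) := by
        rw [← sum_mul, sum_Icc_acoef (by linarith) hτ, one_mul]
    _ ≤ ∑ i ∈ Icc 1 τ, acoef H τ i * (1 / Real.sqrt i) := by
        refine sum_le_sum fun i hi => mul_le_mul_of_nonneg_left ?_ (acoef_nonneg (by linarith) τ i)
        simp only [mem_Icc] at hi
        have hi_pos : (0 : ℝ) < i := by exact_mod_cast hi.1
        exact one_div_le_one_div_of_le (Real.sqrt_pos.mpr hi_pos)
          (Real.sqrt_le_sqrt (by exact_mod_cast hi.2))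
    _ = ∑ i ∈ Icc 1 τ, acoef H τ i / Real.sqrt i := by simp only [mul_one_div]
end

section
/- Suppose J ∈ ℝ and h : S → ℝ satisfy the sub-solution inequality J + h(s) ≤ r(s) + (Ph)(s) for every state s, where (Ph)(s) = Σ_{s'} P(s,s') h(s'). Then for every state s the discounted value satisfies V_γ(s) ≥ J/(1−γ) − sp(h). -/
open Finset

/-- Application of a transition kernel `P` to a function `f`: `(Pf)(s) = Σ_{s'} P(s,s') f(s')`. -/
noncomputable def Pap {S : Type*} [Fintype S] (P : S → S → ℝ) (f : S → ℝ) : S → ℝ :=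
  fun s => ∑ s' : S, P s s' * f s'

/-- The discounted value `V_γ(s) = Σ_{t=0}^{∞} γ^t (P^t r)(s)`. -/
noncomputable def Vdisc {S : Type*} [Fintype S] (γ : ℝ) (P : S → S → ℝ) (r : S → ℝ) (s : S) :
    ℝ := ∑' t : ℕ, γ ^ t * (Pap P)^[t] r s

/-- The span `sp(h) = max_s h(s) − min_s h(s)`. -/
noncomputable def spanFn {S : Type*} [Fintype S] [Nonempty S] (h : S → ℝ) : ℝ :=
  Finset.univ.sup' Finset.univ_nonempty h - Finset.univ.inf' Finset.univ_nonempty h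

section Aux

variable {S : Type*} [Fintype S] {P : S → S → ℝ}

lemma pap_mono (hPnn : ∀ s s', 0 ≤ P s s') {f g : S → ℝ} (hfg : ∀ s, f s ≤ g s) (s : S) :
    Pap P f s ≤ Pap P g s :=
  Finset.sum_le_sum fun s' _ => mul_le_mul_of_nonneg_left (hfg s') (hPnn s s')

lemma pap_le_const (hPnn : ∀ s s', 0 ≤ P s s') (hPsum : ∀ s, ∑ s' : S, P s s' = 1)
    {f : S → ℝ} {M : ℝ} (hf : ∀ s, f s ≤ M) (s : S) : Pap P f s ≤ M := by
  calc Pap P f s ≤ ∑ s' : S, P s s' * M :=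
        Finset.sum_le_sum fun s' _ => mul_le_mul_of_nonneg_left (hf s') (hPnn s s')
    _ = M := by rw [← Finset.sum_mul, hPsum, one_mul]

lemma const_le_pap (hPnn : ∀ s s', 0 ≤ P s s') (hPsum : ∀ s, ∑ s' : S, P s s' = 1)
    {f : S → ℝ} {m : ℝ} (hf : ∀ s, m ≤ f s) (s : S) : m ≤ Pap P f s := by
  calc m = ∑ s' : S, P s s' * m := by rw [← Finset.sum_mul, hPsum, one_mul]
    _ ≤ Pap P f s :=
        Finset.sum_le_sum fun s' _ => mul_le_mul_of_nonneg_left (hf s') (hPnn s s')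

lemma iter_le_const (hPnn : ∀ s s', 0 ≤ P s s') (hPsum : ∀ s, ∑ s' : S, P s s' = 1)
    {f : S → ℝ} {M : ℝ} (hf : ∀ s, f s ≤ M) : ∀ t s, (Pap P)^[t] f s ≤ M := by
  intro t
  induction t with
  | zero => simpa using hf
  | succ t ih =>
    intro s
    rw [Function.iterate_succ_apply']
    exact pap_le_const hPnn hPsum ih s

lemma const_le_iter (hPnn : ∀ s s', 0 ≤ P s s') (hPsum : ∀ s, ∑ s' : S, P s s' = 1)
    {f : S → ℝ} {m : ℝ} (hf : ∀ s, m ≤ f s) : ∀ t s, m ≤ (Pap P)^[t] f s := by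
  intro t
  induction t with
  | zero => simpa using hf
  | succ t ih =>
    intro s
    rw [Function.iterate_succ_apply']
    exact const_le_pap hPnn hPsum ih s

lemma pap_const_add (hPsum : ∀ s, ∑ s' : S, P s s' = 1) (c : ℝ) (f : S → ℝ) (s : S) :
    Pap P (fun s => c + f s) s = c + Pap P f s := by
  simp only [Pap, mul_add, Finset.sum_add_distrib, ← Finset.sum_mul, hPsum, one_mul]

lemma pap_add (f g : S → ℝ) (s : S) :
    Pap P (fun s => f s + g s) s = Pap P f s + Pap P g s := by
  simp only [Pap, mul_add, Finset.sum_add_distrib]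

end Aux

theorem stmt_7 {S : Type*} [Fintype S] [Nonempty S]
    (P : S → S → ℝ) (hPnn : ∀ s s', 0 ≤ P s s') (hPsum : ∀ s, ∑ s' : S, P s s' = 1)
    (r : S → ℝ) (γ : ℝ) (hγ0 : 0 ≤ γ) (hγ1 : γ < 1)
    (J : ℝ) (h : S → ℝ) (hsub : ∀ s, J + h s ≤ r s + Pap P h s) :
    ∀ s, J / (1 - γ) - spanFn h ≤ Vdisc γ P r s := by
  intro s
  set M : ℝ := Finset.univ.sup' Finset.univ_nonempty h with hM
  set m : ℝ := Finset.univ.inf' Finset.univ_nonempty h with hm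
  have hhM : ∀ s, h s ≤ M := fun s => Finset.le_sup' h (Finset.mem_univ s)
  have hhm : ∀ s, m ≤ h s := fun s => Finset.inf'_le h (Finset.mem_univ s)
  -- pushed-through sub-solution inequality
  have key : ∀ t s, J + (Pap P)^[t] h s ≤ (Pap P)^[t] r s + (Pap P)^[t+1] h s := by
    intro t
    induction t with
    | zero => simpa using hsub
    | succ t ih =>
      intro s
      have h1 := pap_mono hPnn ih s
      rw [pap_const_add hPsum, pap_add] at h1
      simp only [Function.iterate_succ_apply'] at h1 ⊢
      exact h1
  -- summability of the value series
  set Mr : ℝ := Finset.univ.sup' Finset.univ_nonempty r with hMr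
  set mr : ℝ := Finset.univ.inf' Finset.univ_nonempty r with hmr
  have hrM : ∀ t s, (Pap P)^[t] r s ≤ Mr :=
    iter_le_const hPnn hPsum (fun s => Finset.le_sup' r (Finset.mem_univ s))
  have hrm : ∀ t s, mr ≤ (Pap P)^[t] r s :=
    const_le_iter hPnn hPsum (fun s => Finset.inf'_le r (Finset.mem_univ s))
  set C : ℝ := max |mr| |Mr| with hC
  have habs : ∀ t, |(Pap P)^[t] r s| ≤ C := by
    intro t
    rw [abs_le]
    constructor
    · calc -C ≤ -|mr| := by simp [hC]
        _ ≤ mr := neg_abs_le mr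
        _ ≤ _ := hrm t s
    · calc (Pap P)^[t] r s ≤ Mr := hrM t s
        _ ≤ |Mr| := le_abs_self Mr
        _ ≤ C := le_max_right _ _
  have hsummable : Summable (fun t : ℕ => γ ^ t * (Pap P)^[t] r s) := by
    apply Summable.of_norm
    have : Summable (fun t : ℕ => γ ^ t * C) :=
      (summable_geometric_of_lt_one hγ0 hγ1).mul_right C
    apply this.of_nonneg_of_le (fun t => norm_nonneg _)
    intro t
    rw [norm_mul, norm_pow, Real.norm_eq_abs, Real.norm_eq_abs, abs_of_nonneg hγ0]
    exact mul_le_mul_of_nonneg_left (habs t) (pow_nonneg hγ0 t)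
  have hγne : (1 : ℝ) - γ ≠ 0 := by linarith
  -- bound on partial sums
  have hhMiter : ∀ t s, (Pap P)^[t] h s ≤ M := iter_le_const hPnn hPsum hhM
  have partial_bound : ∀ T : ℕ,
      J * ((1 - γ ^ T) / (1 - γ)) - spanFn h ≤
        ∑ t ∈ Finset.range T, γ ^ t * (Pap P)^[t] r s := by
    intro T
    have term_bound : ∀ t : ℕ,
        γ ^ t * J + (γ ^ t * (Pap P)^[t] h s - γ ^ (t+1) * (Pap P)^[t+1] h s)
          - (1 - γ) * (γ ^ t * (Pap P)^[t+1] h s)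
          ≤ γ ^ t * (Pap P)^[t] r s := by
      intro t
      have key2 : γ ^ t * J + γ ^ t * (Pap P)^[t] h s - γ ^ t * (Pap P)^[t+1] h s
          ≤ γ ^ t * (Pap P)^[t] r s := by
        nlinarith [mul_nonneg (pow_nonneg hγ0 t) (sub_nonneg.mpr (key t s))]
      have e : γ ^ t * J + (γ ^ t * (Pap P)^[t] h s - γ ^ (t+1) * (Pap P)^[t+1] h s)
          - (1 - γ) * (γ ^ t * (Pap P)^[t+1] h s)
          = γ ^ t * J + γ ^ t * (Pap P)^[t] h s - γ ^ t * (Pap P)^[t+1] h s := by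
        rw [pow_succ]; ring
      rw [e]
      exact key2
    have hsum := Finset.sum_le_sum (fun t (_ : t ∈ Finset.range T) => term_bound t)
    rw [Finset.sum_sub_distrib, Finset.sum_add_distrib, Finset.sum_range_sub'] at hsum
    simp only [pow_zero, one_mul, Function.iterate_zero_apply] at hsum
    -- bound the residual terms
    have hb1 : -(γ ^ T * M) ≤ -(γ ^ T * (Pap P)^[T] h s) := by
      have := hhMiter T s
      nlinarith [pow_nonneg hγ0 T]
    have hb2 : ∑ t ∈ Finset.range T, (1 - γ) * (γ ^ t * (Pap P)^[t+1] h s)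
        ≤ ∑ t ∈ Finset.range T, (1 - γ) * (γ ^ t * M) := by
      apply Finset.sum_le_sum
      intro t _
      have h1 := hhMiter (t+1) s
      have h2 : (0:ℝ) ≤ (1 - γ) * γ ^ t :=
        mul_nonneg (by linarith) (pow_nonneg hγ0 t)
      nlinarith
    have hgeo : ∑ t ∈ Finset.range T, γ ^ t = (1 - γ ^ T) / (1 - γ) := by
      rw [geom_sum_eq (by linarith : γ ≠ 1)]
      rw [div_eq_div_iff (by linarith : γ - 1 ≠ 0) hγne]
      ring
    have hgeo2 : ∑ t ∈ Finset.range T, (1 - γ) * (γ ^ t * M)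
        = M - γ ^ T * M := by
      rw [← Finset.mul_sum, ← Finset.sum_mul, hgeo]
      field_simp
    have hJ : ∑ t ∈ Finset.range T, γ ^ t * J = J * ((1 - γ ^ T) / (1 - γ)) := by
      rw [← Finset.sum_mul, hgeo]; ring
    have hspan : spanFn h = M - m := rfl
    have hms : m ≤ h s := hhm s
    rw [hJ] at hsum
    rw [hgeo2] at hb2
    rw [hspan]
    linarith [hsum, hb1, hb2, hms]
  -- limits
  have hS : Filter.Tendsto (fun T => ∑ t ∈ Finset.range T, γ ^ t * (Pap P)^[t] r s)
      Filter.atTop (nhds (Vdisc γ P r s)) := hsummable.hasSum.tendsto_sum_nat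
  have hpow0 : Filter.Tendsto (fun T : ℕ => γ ^ T) Filter.atTop (nhds 0) :=
    tendsto_pow_atTop_nhds_zero_of_lt_one hγ0 hγ1
  have hg : Filter.Tendsto (fun T : ℕ => J * ((1 - γ ^ T) / (1 - γ)) - spanFn h)
      Filter.atTop (nhds (J / (1 - γ) - spanFn h)) := by
    have : Filter.Tendsto (fun T : ℕ => J * ((1 - γ ^ T) / (1 - γ)) - spanFn h)
        Filter.atTop (nhds (J * ((1 - 0) / (1 - γ)) - spanFn h)) := by
      apply Filter.Tendsto.sub_const
      apply Filter.Tendsto.const_mul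
      apply Filter.Tendsto.div_const
      exact (tendsto_const_nhds.sub hpow0)
    simpa [div_eq_mul_inv] using this
  exact le_of_tendsto_of_tendsto' hg hS partial_bound
end

section
/- Suppose J ∈ ℝ and h : S → ℝ satisfy the super-solution inequality J + h(s) ≥ r(s) + (Ph)(s) for every state s, where (Ph)(s) = Σ_{s'} P(s,s') h(s'). Then for every state s the discounted value satisfies V_γ(s) ≤ J/(1−γ) + sp(h). -/
open Finset

/-!
Rearranged, the super-solution inequality reads `r - J ≤ h - P h`. The operators `P ^ t` are
monotone and fix constants, so `P ^ t r - J ≤ P ^ t h - P ^ (t + 1) h`. Weighting by `γ ^ t` and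
summing, the right-hand side is a telescoping sum with decreasing weights; by Abel summation its
partial sums are at most `h s - min h ≤ sp h`.
-/

section Pap

variable {S : Type*} [Fintype S] {P : S → S → ℝ}

lemma Pap_eq_mulVecLin (P : S → S → ℝ) : Pap P = ⇑(Matrix.of P).mulVecLin := rfl

lemma iterate_Pap_sub (P : S → S → ℝ) (f g : S → ℝ) (t : ℕ) :
    (Pap P)^[t] (f - g) = (Pap P)^[t] f - (Pap P)^[t] g := by
  rw [Pap_eq_mulVecLin, ← Module.End.coe_pow, map_sub]

lemma Pap_monotone (hPnn : ∀ s s', 0 ≤ P s s') : Monotone (Pap P) :=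
  fun _ _ hfg s => sum_le_sum fun s' _ => mul_le_mul_of_nonneg_left (hfg s') (hPnn s s')

lemma iterate_Pap_const (hPsum : ∀ s, ∑ s' : S, P s s' = 1) (c : ℝ) (t : ℕ) :
    (Pap P)^[t] (fun _ => c) = fun _ => c :=
  Function.iterate_fixed (funext fun s => by simp only [Pap, ← sum_mul, hPsum s, one_mul]) t

lemma le_iterate_Pap (hPnn : ∀ s s', 0 ≤ P s s') (hPsum : ∀ s, ∑ s' : S, P s s' = 1)
    {f : S → ℝ} {c : ℝ} (hc : ∀ s, c ≤ f s) (t : ℕ) (s : S) : c ≤ (Pap P)^[t] f s := by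
  simpa only [iterate_Pap_const hPsum] using ((Pap_monotone hPnn).iterate t (fun s => hc s)) s

lemma iterate_Pap_le (hPnn : ∀ s s', 0 ≤ P s s') (hPsum : ∀ s, ∑ s' : S, P s s' = 1)
    {f : S → ℝ} {c : ℝ} (hc : ∀ s, f s ≤ c) (t : ℕ) (s : S) : (Pap P)^[t] f s ≤ c := by
  simpa only [iterate_Pap_const hPsum] using ((Pap_monotone hPnn).iterate t (fun s => hc s)) s

lemma iterate_Pap_le_sub_succ (hPnn : ∀ s s', 0 ≤ P s s') {f g : S → ℝ}
    (hfg : f ≤ g - Pap P g) (t : ℕ) :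
    (Pap P)^[t] f ≤ (Pap P)^[t] g - (Pap P)^[t + 1] g := by
  simpa only [iterate_Pap_sub, ← Function.iterate_succ_apply] using
    (Pap_monotone hPnn).iterate t hfg

end Pap

lemma summable_pow_mul_of_abs_le {γ : ℝ} (hγ0 : 0 ≤ γ) (hγ1 : γ < 1) {u : ℕ → ℝ} {C : ℝ}
    (hu : ∀ t, |u t| ≤ C) : Summable fun t => γ ^ t * u t := by
  refine .of_norm_bounded ((summable_geometric_of_lt_one hγ0 hγ1).mul_right C) fun t => ?_
  rw [norm_mul, norm_pow, Real.norm_eq_abs, Real.norm_eq_abs, abs_of_nonneg hγ0]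
  exact mul_le_mul_of_nonneg_left (hu t) (pow_nonneg hγ0 t)

lemma sum_range_pow_mul_sub_succ_le {γ : ℝ} (hγ0 : 0 ≤ γ) (hγ1 : γ ≤ 1) {a : ℕ → ℝ} {m : ℝ}
    (ha : ∀ t, m ≤ a t) (n : ℕ) : ∑ t ∈ range n, γ ^ t * (a t - a (t + 1)) ≤ a 0 - m := by
  suffices h : ∀ n, ∑ t ∈ range n, γ ^ t * (a t - a (t + 1)) + γ ^ n * (a n - m) ≤ a 0 - m from
    (le_add_of_nonneg_right (mul_nonneg (pow_nonneg hγ0 n) (sub_nonneg.2 (ha n)))).trans (h n)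
  intro n
  induction n with
  | zero => simp
  | succ n ih =>
    have hdrop : 0 ≤ γ ^ n * (1 - γ) * (a (n + 1) - m) :=
      mul_nonneg (mul_nonneg (pow_nonneg hγ0 n) (sub_nonneg.2 hγ1)) (sub_nonneg.2 (ha (n + 1)))
    rw [sum_range_succ, pow_succ]
    linarith

theorem stmt_8 {S : Type*} [Fintype S] [Nonempty S]
    (P : S → S → ℝ) (hPnn : ∀ s s', 0 ≤ P s s') (hPsum : ∀ s, ∑ s' : S, P s s' = 1)
    (r : S → ℝ) (γ : ℝ) (hγ0 : 0 ≤ γ) (hγ1 : γ < 1)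
    (J : ℝ) (h : S → ℝ) (hsup : ∀ s, r s + Pap P h s ≤ J + h s) :
    ∀ s, Vdisc γ P r s ≤ J / (1 - γ) + spanFn h := by
  intro s
  set m := univ.inf' univ_nonempty h
  have hterm (t : ℕ) : γ ^ t * ((Pap P)^[t] r s - J) ≤
      γ ^ t * ((Pap P)^[t] h s - (Pap P)^[t + 1] h s) := by
    have := iterate_Pap_le_sub_succ hPnn (f := r - fun _ => J) (g := h)
      (fun s => by have := hsup s; simp only [Pi.sub_apply]; linarith) t s
    simp only [iterate_Pap_sub, iterate_Pap_const hPsum, Pi.sub_apply] at this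
    exact mul_le_mul_of_nonneg_left this (pow_nonneg hγ0 t)
  have hbound (t : ℕ) : |(Pap P)^[t] r s| ≤ ∑ s', |r s'| := by
    have hr (s : S) : |r s| ≤ ∑ s', |r s'| :=
      single_le_sum (fun s' _ => abs_nonneg (r s')) (mem_univ s)
    exact abs_le.2 ⟨le_iterate_Pap hPnn hPsum (fun s => (abs_le.1 (hr s)).1) t s,
      iterate_Pap_le hPnn hPsum (fun s => (abs_le.1 (hr s)).2) t s⟩
  have hV : HasSum (fun t => γ ^ t * ((Pap P)^[t] r s - J)) (Vdisc γ P r s - J / (1 - γ)) := by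
    simp only [mul_sub, div_eq_mul_inv, mul_comm J]
    exact (summable_pow_mul_of_abs_le hγ0 hγ1 hbound).hasSum.sub
      ((hasSum_geometric_of_lt_one hγ0 hγ1).mul_right J)
  have hVle : Vdisc γ P r s - J / (1 - γ) ≤ h s - m := by
    rw [← hV.tsum_eq]
    refine hV.summable.tsum_le_of_sum_range_le fun n => (sum_le_sum fun t _ => hterm t).trans ?_
    simpa only [Function.iterate_zero_apply] using sum_range_pow_mul_sub_succ_le hγ0 hγ1.le
      (le_iterate_Pap hPnn hPsum (fun s => inf'_le h (mem_univ s)) · s) n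
  have hM : h s ≤ univ.sup' univ_nonempty h := le_sup' h (mem_univ s)
  rw [spanFn]
  linarith
end

section
/- Suppose J ∈ ℝ and h : S → ℝ satisfy the Poisson equation J + h(s) = r(s) + (Ph)(s) for every state s, where (Ph)(s) = Σ_{s'} P(s,s') h(s'). Then for every state s, the average reward J and the normalized discounted value are close: |J − (1−γ) V_γ(s)| ≤ (1−γ) · sp(h). -/
open Finset

/-!
Writing the Poisson equation as `r = J + h - P h` gives `P^t r = J + P^t h - P^{t+1} h`, so
summation by parts yields `J - (1 - γ) V_γ(s) = (1 - γ) ((1 - γ) ∑ γ^t (P^{t+1} h)(s) - h(s))`.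
Since `P` is stochastic, every `P^t h` takes values in `[min h, max h]`, hence so does the
geometric average `(1 - γ) ∑ γ^t (P^{t+1} h)(s)`, and the difference in brackets is at most `sp(h)`.
-/

open Set

section Stochastic

variable {S : Type*} [Fintype S] {P : S → S → ℝ}

theorem Pap_const_add (hPsum : ∀ s, ∑ s' : S, P s s' = 1) (c : ℝ) (f : S → ℝ) :
    Pap P (fun y => c + f y) = fun x => c + Pap P f x := by
  funext x
  simp only [Pap, mul_add, sum_add_distrib, ← sum_mul, hPsum, one_mul]

theorem Pap_sub (f g : S → ℝ) : Pap P (f - g) = Pap P f - Pap P g := by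
  funext x
  simp only [Pap, Pi.sub_apply, mul_sub, sum_sub_distrib]

theorem Pap_mem_Icc (hPnn : ∀ s s', 0 ≤ P s s') (hPsum : ∀ s, ∑ s' : S, P s s' = 1)
    {f : S → ℝ} {m M : ℝ} (hf : ∀ x, f x ∈ Icc m M) (x : S) : Pap P f x ∈ Icc m M := by
  have hconst : ∀ c : ℝ, ∑ s' : S, P x s' * c = c := fun c => by rw [← sum_mul, hPsum, one_mul]
  constructor
  · calc m = ∑ s' : S, P x s' * m := (hconst m).symm
      _ ≤ Pap P f x := sum_le_sum fun i _ => mul_le_mul_of_nonneg_left (hf i).1 (hPnn x i)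
  · calc Pap P f x ≤ ∑ s' : S, P x s' * M :=
          sum_le_sum fun i _ => mul_le_mul_of_nonneg_left (hf i).2 (hPnn x i)
      _ = M := hconst M

theorem iterate_Pap_mem_Icc (hPnn : ∀ s s', 0 ≤ P s s') (hPsum : ∀ s, ∑ s' : S, P s s' = 1)
    {f : S → ℝ} {m M : ℝ} (hf : ∀ x, f x ∈ Icc m M) (t : ℕ) (x : S) :
    (Pap P)^[t] f x ∈ Icc m M := by
  induction t generalizing x with
  | zero => exact hf x
  | succ t ih =>
    rw [Function.iterate_succ_apply']
    exact Pap_mem_Icc hPnn hPsum ih x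

theorem iterate_Pap_of_poisson (hPsum : ∀ s, ∑ s' : S, P s s' = 1) {r h : S → ℝ} {J : ℝ}
    (hpoisson : ∀ s, J + h s = r s + Pap P h s) (t : ℕ) :
    (Pap P)^[t] r = fun x => J + ((Pap P)^[t] h x - (Pap P)^[t + 1] h x) := by
  induction t with
  | zero =>
    funext x
    simp only [Function.iterate_zero, id_eq, zero_add, Function.iterate_one]
    linarith [hpoisson x]
  | succ t ih =>
    rw [Function.iterate_succ_apply', ih, Pap_const_add hPsum]
    funext x
    rw [← Pi.sub_def, Pap_sub, Pi.sub_apply, ← Function.iterate_succ_apply' (Pap P),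
      ← Function.iterate_succ_apply' (Pap P)]

end Stochastic

section Geometric

variable {γ m M : ℝ} {a : ℕ → ℝ}

theorem summable_pow_mul_of_mem_Icc (hγ0 : 0 ≤ γ) (hγ1 : γ < 1) (ha : ∀ t, a t ∈ Icc m M) :
    Summable fun t => γ ^ t * a t := by
  refine .of_norm_bounded ((summable_geometric_of_lt_one hγ0 hγ1).mul_right (max |m| |M|))
    fun t => ?_
  rw [Real.norm_eq_abs, abs_mul, abs_of_nonneg (pow_nonneg hγ0 t)]
  exact mul_le_mul_of_nonneg_left (abs_le_max_abs_abs (ha t).1 (ha t).2) (pow_nonneg hγ0 t)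

theorem tsum_pow_mul_const (hγ0 : 0 ≤ γ) (hγ1 : γ < 1) (c : ℝ) :
    ∑' t : ℕ, γ ^ t * c = c / (1 - γ) := by
  rw [tsum_mul_right, tsum_geometric_of_lt_one hγ0 hγ1, inv_mul_eq_div]

theorem one_sub_mul_tsum_pow_mul_mem_Icc (hγ0 : 0 ≤ γ) (hγ1 : γ < 1)
    (ha : ∀ t, a t ∈ Icc m M) : (1 - γ) * ∑' t, γ ^ t * a t ∈ Icc m M := by
  have hγ : 0 < 1 - γ := sub_pos.mpr hγ1
  have hsum := summable_pow_mul_of_mem_Icc hγ0 hγ1 ha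
  have hgeo := summable_geometric_of_lt_one hγ0 hγ1
  have hlo : ∑' t : ℕ, γ ^ t * m ≤ ∑' t, γ ^ t * a t :=
    (hgeo.mul_right m).tsum_le_tsum
      (fun t => mul_le_mul_of_nonneg_left (ha t).1 (pow_nonneg hγ0 t)) hsum
  have hhi : ∑' t, γ ^ t * a t ≤ ∑' t : ℕ, γ ^ t * M :=
    hsum.tsum_le_tsum
      (fun t => mul_le_mul_of_nonneg_left (ha t).2 (pow_nonneg hγ0 t)) (hgeo.mul_right M)
  rw [tsum_pow_mul_const hγ0 hγ1] at hlo hhi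
  constructor
  · rwa [div_le_iff₀ hγ, mul_comm] at hlo
  · rwa [le_div_iff₀ hγ, mul_comm] at hhi

theorem tsum_pow_mul_sub_succ (hs : Summable fun t => γ ^ t * a t)
    (hs' : Summable fun t => γ ^ t * a (t + 1)) :
    ∑' t, γ ^ t * (a t - a (t + 1)) = a 0 - (1 - γ) * ∑' t, γ ^ t * a (t + 1) := by
  have hshift : ∑' t, γ ^ (t + 1) * a (t + 1) = γ * ∑' t, γ ^ t * a (t + 1) := by
    rw [← tsum_mul_left]
    exact tsum_congr fun t => by ring
  simp_rw [mul_sub]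
  rw [hs.tsum_sub hs', hs.tsum_eq_zero_add, hshift, pow_zero, one_mul]
  ring

end Geometric

theorem stmt_9 {S : Type*} [Fintype S] [Nonempty S]
    (P : S → S → ℝ) (hPnn : ∀ s s', 0 ≤ P s s') (hPsum : ∀ s, ∑ s' : S, P s s' = 1)
    (r : S → ℝ) (γ : ℝ) (hγ0 : 0 ≤ γ) (hγ1 : γ < 1)
    (J : ℝ) (h : S → ℝ) (hpoisson : ∀ s, J + h s = r s + Pap P h s) :
    ∀ s, |J - (1 - γ) * Vdisc γ P r s| ≤ (1 - γ) * spanFn h := by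
  intro s
  have hγ : 0 < 1 - γ := sub_pos.mpr hγ1
  set a : ℕ → ℝ := fun t => (Pap P)^[t] h s
  have ha : ∀ t, a t ∈ Icc (univ.inf' univ_nonempty h) (univ.sup' univ_nonempty h) :=
    fun t => iterate_Pap_mem_Icc hPnn hPsum
      (fun x => ⟨inf'_le _ (mem_univ x), le_sup' _ (mem_univ x)⟩) t s
  have hs := summable_pow_mul_of_mem_Icc hγ0 hγ1 ha
  have hs' := summable_pow_mul_of_mem_Icc hγ0 hγ1 fun t => ha (t + 1)
  set B := ∑' t, γ ^ t * a (t + 1)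
  have hV : Vdisc γ P r s = J / (1 - γ) + (a 0 - (1 - γ) * B) := by
    calc Vdisc γ P r s = ∑' t, (γ ^ t * J + γ ^ t * (a t - a (t + 1))) := by
          simp_rw [Vdisc, iterate_Pap_of_poisson hPsum hpoisson, mul_add]
          rfl
      _ = J / (1 - γ) + (a 0 - (1 - γ) * B) := by
          rw [((summable_geometric_of_lt_one hγ0 hγ1).mul_right J).tsum_add
            (by simpa only [mul_sub] using hs.sub hs'), tsum_pow_mul_const hγ0 hγ1,
            tsum_pow_mul_sub_succ hs hs']
  have hkey : J - (1 - γ) * Vdisc γ P r s = (1 - γ) * ((1 - γ) * B - a 0) := by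
    rw [hV]
    field_simp
    ring
  rw [hkey, abs_mul, abs_of_pos hγ, spanFn, ← Real.dist_eq]
  exact mul_le_mul_of_nonneg_left
    (Real.dist_le_of_mem_Icc (one_sub_mul_tsum_pow_mul_mem_Icc hγ0 hγ1 fun t => ha (t + 1)) (ha 0))
    hγ.le
end

section
/- Let I be a finite set of cardinality K and let N : I → ℕ be counts with total Σ_{i∈I} N(i) = T. Then Σ_{i∈I} Σ_{j=1}^{N(i)} 1/√j ≤ 2√(K·T). -/
open Finset

lemma sum_inv_sqrt_le (n : ℕ) :
    ∑ j ∈ Finset.Icc 1 n, (1 : ℝ) / Real.sqrt j ≤ 2 * Real.sqrt n := by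
  induction n with
  | zero => simp
  | succ n ih =>
    rw [Finset.sum_Icc_succ_top (by omega : 1 ≤ n + 1)]
    have h1 : (1 : ℝ) / Real.sqrt (n + 1) ≤ 2 * Real.sqrt (n + 1) - 2 * Real.sqrt n := by
      have hpos : (0 : ℝ) < Real.sqrt (n + 1) := by positivity
      rw [div_le_iff₀ hpos, sub_mul, mul_assoc, Real.mul_self_sqrt (by positivity)]
      have e1 : Real.sqrt n * Real.sqrt n = (n : ℝ) := Real.mul_self_sqrt (by positivity)
      have e2 : Real.sqrt (n+1) * Real.sqrt (n+1) = (n + 1 : ℝ) := Real.mul_self_sqrt (by positivity)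
      nlinarith [sq_nonneg (Real.sqrt (n+1) - Real.sqrt n)]
    push_cast
    linarith
  
theorem stmt_10 {I : Type*} [Fintype I] (K : ℕ) (hK : Fintype.card I = K)
    (N : I → ℕ) (T : ℕ) (hT : ∑ i : I, N i = T) :
    ∑ i : I, ∑ j ∈ Finset.Icc 1 (N i), (1 : ℝ) / Real.sqrt j ≤
      2 * Real.sqrt (K * T) := by
  have h1 : ∑ i : I, ∑ j ∈ Finset.Icc 1 (N i), (1 : ℝ) / Real.sqrt j
      ≤ ∑ i : I, 2 * Real.sqrt (N i) :=
    Finset.sum_le_sum fun i _ => sum_inv_sqrt_le (N i)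
  have h2 : ∑ i : I, Real.sqrt (N i) ≤ Real.sqrt (K * T) := by
    rw [← Real.sqrt_sq (by positivity : (0:ℝ) ≤ ∑ i : I, Real.sqrt (N i))]
    apply Real.sqrt_le_sqrt
    calc (∑ i : I, Real.sqrt (N i)) ^ 2
        ≤ (Fintype.card I) * ∑ i : I, Real.sqrt (N i) ^ 2 := by
          simpa using sq_sum_le_card_mul_sum_sq (s := Finset.univ) (f := fun i => Real.sqrt (N i))
      _ = K * T := by
          rw [hK]
          have : ∑ i : I, Real.sqrt (N i) ^ 2 = (T : ℝ) := by
            rw [← hT]; push_cast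
            exact Finset.sum_congr rfl fun i _ => Real.sq_sqrt (by positivity)
          rw [this]
  calc ∑ i : I, ∑ j ∈ Finset.Icc 1 (N i), (1 : ℝ) / Real.sqrt j
      ≤ ∑ i : I, 2 * Real.sqrt (N i) := h1
    _ = 2 * ∑ i : I, Real.sqrt (N i) := by rw [Finset.mul_sum]
    _ ≤ 2 * Real.sqrt (K * T) := by linarith
end

section
/- Let T ≥ 1 be an integer, I a finite set of cardinality K, and z : {1,…,T} → I a sequence. For 1 ≤ t ≤ T let n_t = #{t' : 1 ≤ t' ≤ t and z_{t'} = z_t} (note n_t ≥ 1). Then Σ_{t=1}^{T} 1/√(n_t) ≤ 2√(K·T). -/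
open Finset

lemma sum_one_div_sqrt_le (m : ℕ) :
    ∑ k ∈ Finset.Icc 1 m, (1 : ℝ) / Real.sqrt k ≤ 2 * Real.sqrt m := by
  induction m with
  | zero => simp
  | succ m ih =>
    rw [Finset.sum_Icc_succ_top (by omega)]
    have hb : (0:ℝ) < Real.sqrt (m+1) := Real.sqrt_pos.2 (by positivity)
    have ha : (0:ℝ) ≤ Real.sqrt m := Real.sqrt_nonneg m
    have ha2 : Real.sqrt m ^ 2 = m := Real.sq_sqrt (by positivity)
    have hb2 : Real.sqrt (m+1) ^ 2 = (m:ℝ)+1 := Real.sq_sqrt (by positivity)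
    have key : (1:ℝ) / Real.sqrt (m+1) ≤ 2 * Real.sqrt (m+1) - 2 * Real.sqrt m := by
      rw [div_le_iff₀ hb]
      nlinarith [sq_nonneg (Real.sqrt m - Real.sqrt (m+1))]
    have : ((m:ℝ)+1) = ((m+1 : ℕ) : ℝ) := by push_cast; ring
    push_cast
    linarith [ih]

theorem stmt_12 {I : Type*} [Fintype I] [DecidableEq I] (K : ℕ) (hK : Fintype.card I = K)
    (T : ℕ) (hT : 1 ≤ T) (z : ℕ → I)
    (n : ℕ → ℕ) (hn : ∀ t, 1 ≤ t → t ≤ T →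
      n t = ((Finset.Icc 1 t).filter (fun t' => z t' = z t)).card) :
    ∑ t ∈ Finset.Icc 1 T, (1 : ℝ) / Real.sqrt (n t) ≤ 2 * Real.sqrt (K * T) := by
  classical
  set S : I → Finset ℕ := fun i => (Finset.Icc 1 T).filter (fun t => z t = i) with hS
  -- fiberwise decomposition
  have hfib : ∑ t ∈ Finset.Icc 1 T, (1 : ℝ) / Real.sqrt (n t)
      = ∑ i ∈ Finset.univ, ∑ t ∈ S i, (1 : ℝ) / Real.sqrt (n t) := by
    rw [hS]
    exact (Finset.sum_fiberwise_of_maps_to (fun t _ => Finset.mem_univ (z t)) _).symm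
  rw [hfib]
  -- n is injective on each fiber and maps into Icc 1 (card (S i))
  have hinj : ∀ i : I, ∀ t ∈ S i, ∀ t' ∈ S i, t < t' → n t < n t' := by
    intro i t ht t' ht' hlt
    simp only [hS, Finset.mem_filter, Finset.mem_Icc] at ht ht'
    rw [hn t ht.1.1 ht.1.2, hn t' ht'.1.1 ht'.1.2]
    have hz : z t = z t' := ht.2.trans ht'.2.symm
    apply Finset.card_lt_card
    constructor
    · intro x hx
      simp only [Finset.mem_filter, Finset.mem_Icc] at hx ⊢
      exact ⟨⟨hx.1.1, hx.1.2.trans hlt.le⟩, hx.2.trans hz⟩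
    · intro hsub
      have h2 := hsub (Finset.mem_filter.2
        ⟨Finset.mem_Icc.2 ⟨ht'.1.1, le_refl _⟩, rfl⟩)
      have := (Finset.mem_Icc.1 (Finset.mem_filter.1 h2).1).2
      omega
  have hmaps : ∀ i : I, ∀ t ∈ S i, n t ∈ Finset.Icc 1 (S i).card := by
    intro i t ht
    have ht' := ht
    simp only [hS, Finset.mem_filter, Finset.mem_Icc] at ht'
    rw [Finset.mem_Icc, hn t ht'.1.1 ht'.1.2]
    constructor
    · exact Finset.card_pos.2 ⟨t, Finset.mem_filter.2
        ⟨Finset.mem_Icc.2 ⟨ht'.1.1, le_refl _⟩, rfl⟩⟩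
    · apply Finset.card_le_card
      intro x hx
      have hx1 := Finset.mem_Icc.1 (Finset.mem_filter.1 hx).1
      have hx2 := (Finset.mem_filter.1 hx).2
      exact Finset.mem_filter.2 ⟨Finset.mem_Icc.2 ⟨hx1.1, hx1.2.trans ht'.1.2⟩,
        hx2.trans ht'.2⟩
  -- each fiber sum bounded by 2 √(card (S i))
  have hstep : ∀ i : I, ∑ t ∈ S i, (1 : ℝ) / Real.sqrt (n t)
      ≤ 2 * Real.sqrt ((S i).card) := by
    intro i
    have hinj' : Set.InjOn n (S i) := by
      intro a ha b hb hab
      by_contra hne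
      rcases lt_or_gt_of_ne hne with h | h
      · exact absurd hab (hinj i a ha b hb h).ne
      · exact absurd hab.symm (hinj i b hb a ha h).ne
    calc ∑ t ∈ S i, (1 : ℝ) / Real.sqrt (n t)
        = ∑ k ∈ (S i).image n, (1 : ℝ) / Real.sqrt k := by
          rw [Finset.sum_image (fun a ha b hb => hinj' ha hb)]
      _ ≤ ∑ k ∈ Finset.Icc 1 (S i).card, (1 : ℝ) / Real.sqrt k := by
          apply Finset.sum_le_sum_of_subset_of_nonneg
          · intro k hk
            obtain ⟨t, ht, rfl⟩ := Finset.mem_image.1 hk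
            exact hmaps i t ht
          · intro k _ _; positivity
      _ ≤ 2 * Real.sqrt ((S i).card) := sum_one_div_sqrt_le _
  have h1 : ∑ i ∈ Finset.univ, ∑ t ∈ S i, (1 : ℝ) / Real.sqrt (n t)
      ≤ ∑ i ∈ Finset.univ, 2 * Real.sqrt ((S i).card) :=
    Finset.sum_le_sum (fun i _ => hstep i)
  -- total cards sum to T
  have hcard : ∑ i ∈ Finset.univ, (S i).card = T := by
    rw [hS, ← Finset.card_eq_sum_card_fiberwise (fun t _ => Finset.mem_univ (z t))]
    simp
  -- Cauchy-Schwarz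
  have hCS : ∑ i ∈ Finset.univ, Real.sqrt ((S i).card) ≤ Real.sqrt (K * T) := by
    have hnn : 0 ≤ ∑ i ∈ Finset.univ, Real.sqrt ((S i).card) :=
      Finset.sum_nonneg (fun i _ => Real.sqrt_nonneg _)
    rw [← Real.sqrt_sq hnn]
    apply Real.sqrt_le_sqrt
    push_cast
    have := sq_sum_le_card_mul_sum_sq
      (s := (Finset.univ : Finset I)) (f := fun i => Real.sqrt ((S i).card))
    calc (∑ i ∈ Finset.univ, Real.sqrt ((S i).card)) ^ 2
        ≤ (Finset.univ : Finset I).card * ∑ i ∈ Finset.univ, Real.sqrt ((S i).card) ^ 2 := this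
      _ = (K : ℝ) * (T : ℝ) := by
          rw [Finset.card_univ, hK]
          congr 1
          rw [← hcard]
          push_cast
          exact Finset.sum_congr rfl (fun i _ => Real.sq_sqrt (by positivity))
  calc ∑ i ∈ Finset.univ, ∑ t ∈ S i, (1 : ℝ) / Real.sqrt (n t)
      ≤ ∑ i ∈ Finset.univ, 2 * Real.sqrt ((S i).card) := h1
    _ = 2 * ∑ i ∈ Finset.univ, Real.sqrt ((S i).card) := by rw [Finset.mul_sum]
    _ ≤ 2 * Real.sqrt (K * T) := by linarith [hCS]
end

section
/- For every integer N ≥ 0 and every nonnegative real sequence (x_i)_{i≥1}, exchanging the order of summation yields the bound Σ_{j=1}^{N} Σ_{i=1}^{j} α_j^i x_i ≤ (1 + 1/H) · Σ_{i=1}^{N} x_i. -/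
open Finset

/-!
For fixed `i ≥ 1` the column sums `S_i = ∑_{j=i}^{N} α_j^i` satisfy
`α_j^i = i/(H+i) · α_j^{i+1}` for `j > i`, hence `S_i = α_i + i/(H+i) · S_{i+1}`.
Since `α_i + i/(H+i) · (1 + 1/H) = 1 + 1/H`, downward induction gives the closed form
`S_i = (1 + 1/H) (1 - ∏_{k=i}^{N} k/(H+k)) ≤ 1 + 1/H`,
and exchanging the order of summation finishes the proof.
-/

lemma Finset.sum_Icc_sum_Icc_comm {M : Type*} [AddCommMonoid M] (a N : ℕ) (f : ℕ → ℕ → M) :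
    ∑ j ∈ Icc a N, ∑ i ∈ Icc a j, f j i = ∑ i ∈ Icc a N, ∑ j ∈ Icc i N, f j i :=
  sum_comm' fun j i => by simp only [mem_Icc]; omega

lemma acoef_of_ne_zero (H : ℝ) (τ : ℕ) {i : ℕ} (hi : i ≠ 0) :
    acoef H τ i = lr H i * ∏ j ∈ Icc (i + 1) τ, (1 - lr H j) := if_neg hi

lemma acoef_self (H : ℝ) {i : ℕ} (hi : i ≠ 0) : acoef H i i = lr H i := by
  rw [acoef_of_ne_zero H i hi, Icc_eq_empty_of_lt (Nat.lt_succ_self i), prod_empty, mul_one]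

lemma acoef_eq_mul_acoef_succ {H : ℝ} (hH : 0 ≤ H) {i j : ℕ} (hi : i ≠ 0) (hij : i < j) :
    acoef H j i = i / (H + i) * acoef H j (i + 1) := by
  have hHi : 0 < H + i := by positivity
  have lr_mul_one_sub_lr : lr H i * (1 - lr H (i + 1)) = i / (H + i) * lr H (i + 1) := by
    simp only [lr, Nat.cast_add_one]
    field_simp
    ring
  rw [acoef_of_ne_zero H j hi, acoef_of_ne_zero H j (Nat.succ_ne_zero i),
    ← insert_Icc_add_one_left_eq_Icc hij, prod_insert (by simp), ← mul_assoc,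
    lr_mul_one_sub_lr, mul_assoc]

lemma sum_acoef_Icc_eq {H : ℝ} (hH : 0 < H) (N : ℕ) {i : ℕ} (hi : i ≠ 0) :
    ∑ j ∈ Icc i N, acoef H j i = (1 + 1 / H) * (1 - ∏ k ∈ Icc i N, (k : ℝ) / (H + k)) := by
  induction hd : N + 1 - i generalizing i with
  | zero => simp [Icc_eq_empty_of_lt (show N < i by omega)]
  | succ d ih =>
    have hiN : i ≤ N := by omega
    have hHi : 0 < H + i := by positivity
    have column_step : ∑ j ∈ Icc (i + 1) N, acoef H j i =
        i / (H + i) * ∑ j ∈ Icc (i + 1) N, acoef H j (i + 1) := by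
      rw [mul_sum]
      exact sum_congr rfl fun j hj => acoef_eq_mul_acoef_succ hH.le hi (mem_Icc.1 hj).1
    rw [← insert_Icc_add_one_left_eq_Icc hiN, sum_insert (by simp), prod_insert (by simp),
      acoef_self H hi, column_step, ih (i := i + 1) (by omega) (by omega), lr]
    field_simp
    ring

lemma sum_acoef_Icc_le {H : ℝ} (hH : 0 < H) (N : ℕ) {i : ℕ} (hi : i ≠ 0) :
    ∑ j ∈ Icc i N, acoef H j i ≤ 1 + 1 / H := by
  rw [sum_acoef_Icc_eq hH N hi]
  have : 0 ≤ ∏ k ∈ Icc i N, (k : ℝ) / (H + k) := prod_nonneg fun k _ => by positivity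
  have : 0 ≤ 1 + 1 / H := by positivity
  nlinarith

theorem stmt_14 (H : ℝ) (hH : 1 ≤ H) (N : ℕ) (x : ℕ → ℝ) (hx : ∀ i, 1 ≤ i → 0 ≤ x i) :
    ∑ j ∈ Finset.Icc 1 N, ∑ i ∈ Finset.Icc 1 j, acoef H j i * x i ≤
      (1 + 1 / H) * ∑ i ∈ Finset.Icc 1 N, x i := by
  have hH₀ : 0 < H := by linarith
  calc ∑ j ∈ Icc 1 N, ∑ i ∈ Icc 1 j, acoef H j i * x i
      = ∑ i ∈ Icc 1 N, (∑ j ∈ Icc i N, acoef H j i) * x i := by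
        simp only [sum_Icc_sum_Icc_comm, sum_mul]
    _ ≤ ∑ i ∈ Icc 1 N, (1 + 1 / H) * x i := by
        refine sum_le_sum fun i hi => ?_
        have hi₁ : 1 ≤ i := (mem_Icc.1 hi).1
        exact mul_le_mul_of_nonneg_right (sum_acoef_Icc_le hH₀ N (by omega)) (hx i hi₁)
    _ = (1 + 1 / H) * ∑ i ∈ Icc 1 N, x i := (mul_sum _ _ _).symm
end
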